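/- arXiv:1401.5834 — 2 statements merged into one kernel-verified Lean document; each statement's English description precedes it below -/
import Mathlib

section
/- With $\Psi_1 = \sum_{m=1}^N (E_{mm}-m+1)$ and $\Psi_2 = \sum_{m=1}^N (E_{mm}-m+1)^2 + 2\sum_{1 \leq l < m \leq N} E_{ml}E_{lm}$ in $U(\mathfrak{gl}_N)$, and $P_t = (\mathrm{id}\otimes\langle\cdot\rangle_t)\circ\Delta$ where $\langle\cdot\rangle_t$ is given by the set-partition moment formula, one has $P_t \Psi_2 = \Psi_2 + 2t\Psi_1 + (t^2 + Nt)N$. -/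
open TensorProduct

/-- The operator `P_t = (id ⊗ ⟨·⟩_t) ∘ Δ`. -/
noncomputable def Pop {A : Type*} [Ring A] [Bialgebra ℂ A] (φ : A →ₗ[ℂ] ℂ) (X : A) : A :=
  (TensorProduct.rid ℂ A)
    ((TensorProduct.map (LinearMap.id : A →ₗ[ℂ] A) φ) (CoalgebraStruct.comul (R := ℂ) X))

/-- `Ψ₁ = ∑_{m=1}^N (E_{mm} - m + 1)`. -/
noncomputable def Psi1 {A : Type*} [Ring A] {N : ℕ} (E : Fin N → Fin N → A) : A :=
  ∑ m : Fin N, (E m m - (m : ℕ) • (1 : A))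

/-- `Ψ₂ = ∑_{m=1}^N (E_{mm} - m + 1)² + 2 ∑_{l<m} E_{ml}E_{lm}`. -/
noncomputable def Psi2 {A : Type*} [Ring A] {N : ℕ} (E : Fin N → Fin N → A) : A :=
  (∑ m : Fin N, (E m m - (m : ℕ) • (1 : A)) ^ 2) +
    2 • ∑ m : Fin N, ∑ l ∈ Finset.univ.filter (fun l : Fin N => l < m), E m l * E l m

section aux

variable {A : Type*} [Ring A] [Bialgebra ℂ A] (φ : A →ₗ[ℂ] ℂ)

lemma Pop_add (x y : A) : Pop φ (x + y) = Pop φ x + Pop φ y := by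
  simp [Pop, map_add]

lemma Pop_nsmul (n : ℕ) (x : A) : Pop φ (n • x) = n • Pop φ x := by
  unfold Pop
  rw [map_nsmul, map_nsmul, map_nsmul]

lemma Pop_sum {ι : Type*} (s : Finset ι) (f : ι → A) :
    Pop φ (∑ i ∈ s, f i) = ∑ i ∈ s, Pop φ (f i) := by
  simp [Pop, map_sum]

lemma Pop_mul' (x y a b : A)
    (hx : CoalgebraStruct.comul (R := ℂ) x = x ⊗ₜ[ℂ] 1 + 1 ⊗ₜ[ℂ] a)
    (hy : CoalgebraStruct.comul (R := ℂ) y = y ⊗ₜ[ℂ] 1 + 1 ⊗ₜ[ℂ] b) :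
    Pop φ (x * y) = φ 1 • (x * y) + φ b • x + φ a • y + φ (a * b) • 1 := by
  have h : CoalgebraStruct.comul (R := ℂ) (x * y)
      = (x * y) ⊗ₜ[ℂ] 1 + x ⊗ₜ[ℂ] b + y ⊗ₜ[ℂ] a + 1 ⊗ₜ[ℂ] (a * b) := by
    rw [show CoalgebraStruct.comul (R := ℂ) (x * y)
        = CoalgebraStruct.comul (R := ℂ) x * CoalgebraStruct.comul (R := ℂ) y from
      Bialgebra.comul_mul x y, hx, hy]
    simp only [add_mul, mul_add, Algebra.TensorProduct.tmul_mul_tmul, one_mul, mul_one]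
    abel
  simp [Pop, h]

end aux

/-- `P_t Ψ₂ = Ψ₂ + 2tΨ₁ + (t² + Nt)N` for the state given by the set-partition
moment formula. -/
theorem Pt_Psi2 {A : Type*} [Ring A] [Bialgebra ℂ A] (N : ℕ) (t : ℂ)
    (E : Fin N → Fin N → A)
    (hE : ∀ l m, CoalgebraStruct.comul (R := ℂ) (E l m) = E l m ⊗ₜ[ℂ] 1 + 1 ⊗ₜ[ℂ] E l m)
    (φ : A →ₗ[ℂ] ℂ) (hφ1 : φ 1 = 1)
    (hφdiag : ∀ m, φ (E m m) = t)
    (hφdiag2 : ∀ m, φ (E m m * E m m) = t ^ 2 + t)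
    (hφoff : ∀ l m, l ≠ m → φ (E m l) = 0)
    (hφcross : ∀ l m, l ≠ m → φ (E m l * E l m) = t) :
    Pop φ (Psi2 E) = Psi2 E + (2 * t) • Psi1 E + ((t ^ 2 + N * t) * N) • (1 : A) := by
  classical
  -- comul of D m = E m m - m • 1
  have hD : ∀ m : Fin N,
      CoalgebraStruct.comul (R := ℂ) (E m m - (m : ℕ) • (1 : A))
        = (E m m - (m : ℕ) • (1 : A)) ⊗ₜ[ℂ] 1 + 1 ⊗ₜ[ℂ] E m m := by
    intro m
    rw [map_sub, hE, map_nsmul, Bialgebra.comul_one, Algebra.TensorProduct.one_def]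
    rw [show (m : ℕ) • ((1 : A) ⊗ₜ[ℂ] (1 : A)) = ((m : ℕ) • (1 : A)) ⊗ₜ[ℂ] (1 : A) from
      (TensorProduct.smul_tmul' _ _ _).symm]
    rw [TensorProduct.sub_tmul]
    abel
  -- value on diagonal squares
  have h1 : ∀ m : Fin N,
      Pop φ ((E m m - (m : ℕ) • (1 : A)) ^ 2)
        = (E m m - (m : ℕ) • (1 : A)) ^ 2 + (2 * t) • (E m m - (m : ℕ) • (1 : A))
          + (t ^ 2 + t) • (1 : A) := by
    intro m
    rw [sq, Pop_mul' φ _ _ (E m m) (E m m) (hD m) (hD m), hφ1, hφdiag, hφdiag2, one_smul, ← sq]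
    module
  -- value on off-diagonal products
  have h2 : ∀ m l : Fin N, l ≠ m →
      Pop φ (E m l * E l m) = E m l * E l m + t • (1 : A) := by
    intro m l hlm
    rw [Pop_mul' φ _ _ (E m l) (E l m) (hE m l) (hE l m), hφ1, one_smul,
      hφoff m l (Ne.symm hlm), hφoff l m hlm, hφcross l m hlm, zero_smul, zero_smul]
    abel
  rw [show Psi2 E = (∑ m : Fin N, (E m m - (m : ℕ) • (1 : A)) ^ 2) +
      2 • ∑ m : Fin N, ∑ l ∈ Finset.univ.filter (fun l : Fin N => l < m), E m l * E l m from rfl,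
    Pop_add, Pop_nsmul]
  simp only [Pop_sum]
  have hsum1 : ∑ m : Fin N, Pop φ ((E m m - (m : ℕ) • (1 : A)) ^ 2)
      = (∑ m : Fin N, (E m m - (m : ℕ) • (1 : A)) ^ 2) + (2 * t) • Psi1 E
        + ((N : ℂ) * (t ^ 2 + t)) • (1 : A) := by
    rw [Finset.sum_congr rfl fun m _ => h1 m]
    rw [Finset.sum_add_distrib, Finset.sum_add_distrib, ← Finset.smul_sum, Finset.sum_const,
      Finset.card_univ, Fintype.card_fin,
      ← Nat.cast_smul_eq_nsmul ℂ N ((t ^ 2 + t) • (1 : A)), smul_smul]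
    rfl
  have hsum2 : ∀ m : Fin N,
      ∑ l ∈ Finset.univ.filter (fun l : Fin N => l < m), Pop φ (E m l * E l m)
        = (∑ l ∈ Finset.univ.filter (fun l : Fin N => l < m), E m l * E l m)
          + ((m : ℕ) : ℂ) • (t • (1 : A)) := by
    intro m
    rw [Finset.sum_congr rfl fun l hl => h2 m l (Finset.mem_filter.mp hl).2.ne]
    rw [Finset.sum_add_distrib, Finset.sum_const]
    congr 1
    have hcard : (Finset.univ.filter (fun l : Fin N => l < m)).card = (m : ℕ) := by
      rw [show Finset.univ.filter (fun l : Fin N => l < m) = Finset.Iio m by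
        ext l; simp [Finset.mem_Iio]]
      exact Fin.card_Iio m
    rw [hcard, ← Nat.cast_smul_eq_nsmul ℂ]
  rw [hsum1, Finset.sum_congr rfl fun m _ => hsum2 m, Finset.sum_add_distrib]
  have hS : ∑ m : Fin N, ((m : ℕ) : ℂ) • (t • (1 : A))
      = (((∑ m : Fin N, (m : ℕ) : ℕ) : ℂ)) • (t • (1 : A)) := by
    rw [← Finset.sum_smul]
    push_cast
    rfl
  rw [hS]
  have hval : (2 : ℕ) * ∑ m : Fin N, (m : ℕ) = N * N - N := by
    rw [Fin.sum_univ_eq_sum_range (fun i => i) N, mul_comm, Finset.sum_range_id_mul_two]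
    cases N with
    | zero => rfl
    | succ n => rw [Nat.succ_sub_one, Nat.mul_succ, Nat.add_sub_cancel]
  have key : (2 : ℕ) • ((((∑ m : Fin N, (m : ℕ) : ℕ) : ℂ)) • (t • (1 : A)))
      = (((N * N - N : ℕ) : ℂ) * t) • (1 : A) := by
    rw [← Nat.cast_smul_eq_nsmul ℂ (2 : ℕ), smul_smul, smul_smul, ← hval]
    congr 1
    push_cast
    ring
  rw [smul_add, key]
  have hle : N ≤ N * N := by
    cases N with
    | zero => exact Nat.le_refl 0
    | succ n => exact Nat.le_mul_of_pos_left _ (Nat.succ_pos n)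
  have hco : ((N : ℂ) * (t ^ 2 + t)) + ((N * N - N : ℕ) : ℂ) * t
      = (t ^ 2 + (N : ℂ) * t) * N := by
    rw [Nat.cast_sub hle]
    push_cast
    ring
  rw [← hco, add_smul]
  abel
end

section
/- Under the state $\langle\cdot\rangle_t$ given by the set-partition moment formula, the generators $E_{11}, \ldots, E_{NN}$ are independent in the sense that $\langle E_{i_1 i_1}^{m_1} \cdots E_{i_r i_r}^{m_r}\rangle_t = \prod_{s=1}^r \langle E_{i_s i_s}^{m_s}\rangle_t = \prod_{s=1}^r B_{m_s}(t)$ whenever $i_1, \ldots, i_r$ are distinct, where $B_m(t)$ is the $m$-th Bell polynomial. -/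
set_option linter.unusedSectionVars false
set_option maxHeartbeats 1000000

open scoped Classical

def IsSetPartition {α : Type*} [DecidableEq α] [Fintype α] (P : Finset (Finset α)) : Prop :=
  (∀ B ∈ P, B.Nonempty) ∧ ∀ x : α, ∃! B, B ∈ P ∧ x ∈ B

def IsCyclicBlock {α ι : Type*} [LinearOrder α] (i j : α → ι) (B : Finset α) : Prop :=
  ∀ n : Fin (B.sort (· ≤ ·)).length,
    j ((B.sort (· ≤ ·)).get n) =
      i ((B.sort (· ≤ ·)).get
        ⟨((n : ℕ) + 1) % (B.sort (· ≤ ·)).length,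
          Nat.mod_lt _ (Nat.lt_of_le_of_lt (Nat.zero_le _) n.isLt)⟩)

def stirling2 : ℕ → ℕ → ℕ
  | 0, 0 => 1
  | 0, _ + 1 => 0
  | _ + 1, 0 => 0
  | n + 1, k + 1 => (k + 1) * stirling2 n (k + 1) + stirling2 n k

noncomputable def bellPoly (m : ℕ) (t : ℝ) : ℝ :=
  ∑ k ∈ Finset.range (m + 1), (stirling2 m k : ℝ) * t ^ k

namespace StateDiag

variable {α : Type*} [DecidableEq α] [Fintype α]


variable {α : Type*} [DecidableEq α] [Fintype α]

def PartsOn (s : Finset α) (P : Finset (Finset α)) : Prop :=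
  (∀ B ∈ P, B ⊆ s) ∧ (∀ B ∈ P, B.Nonempty) ∧ ∀ x ∈ s, ∃! B, B ∈ P ∧ x ∈ B

noncomputable def allParts (s : Finset α) : Finset (Finset (Finset α)) :=
  Finset.univ.filter (PartsOn s)

lemma mem_allParts {s : Finset α} {P : Finset (Finset α)} :
    P ∈ allParts s ↔ PartsOn s P := by
  simp [allParts]


lemma PartsOn.biUnion_eq {s : Finset α} {P : Finset (Finset α)} (h : PartsOn s P) :
    P.biUnion id = s := by
  ext x
  simp only [Finset.mem_biUnion, id]
  constructor
  · rintro ⟨B, hB, hx⟩; exact h.1 B hB hx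
  · intro hx
    obtain ⟨B, hB, -⟩ := h.2.2 x hx
    exact ⟨B, hB.1, hB.2⟩

lemma PartsOn.disjoint {s : Finset α} {P : Finset (Finset α)} (h : PartsOn s P)
    {B C : Finset α} (hB : B ∈ P) (hC : C ∈ P) (hne : B ≠ C) : Disjoint B C := by
  rw [Finset.disjoint_left]
  intro x hxB hxC
  obtain ⟨D, -, hD⟩ := h.2.2 x (h.1 B hB hxB)
  exact hne ((hD B ⟨hB, hxB⟩).trans (hD C ⟨hC, hxC⟩).symm)

lemma PartsOn.sum_card {s : Finset α} {P : Finset (Finset α)} (h : PartsOn s P) :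
    ∑ B ∈ P, B.card = s.card := by
  rw [← h.biUnion_eq]
  exact (Finset.card_biUnion (fun B hB C hC hne => h.disjoint hB hC hne)).symm

lemma PartsOn.card_le {s : Finset α} {P : Finset (Finset α)} (h : PartsOn s P) :
    P.card ≤ s.card := by
  rw [← h.sum_card]
  calc P.card = ∑ _B ∈ P, 1 := by simp
  _ ≤ ∑ B ∈ P, B.card := Finset.sum_le_sum fun B hB => (h.2.1 B hB).card_pos

lemma partsOn_empty_iff {P : Finset (Finset α)} : PartsOn (∅ : Finset α) P ↔ P = ∅ := by
  constructor
  · intro h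
    rw [Finset.eq_empty_iff_forall_notMem]
    intro B hB
    obtain ⟨x, hx⟩ := h.2.1 B hB
    exact absurd (h.1 B hB hx) (by simp)
  · rintro rfl; exact ⟨by simp, by simp, by simp⟩

lemma allParts_empty : allParts (∅ : Finset α) = {∅} := by
  ext P; simp [mem_allParts, partsOn_empty_iff]

lemma block_unique {s : Finset α} {P : Finset (Finset α)} (h : PartsOn s P)
    {B C : Finset α} (hB : B ∈ P) (hC : C ∈ P) {x : α} (hxB : x ∈ B) (hxC : x ∈ C) :
    B = C := by
  obtain ⟨D, -, hD⟩ := h.2.2 x (h.1 B hB hxB)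
  exact (hD B ⟨hB, hxB⟩).trans (hD C ⟨hC, hxC⟩).symm

lemma card_allParts_filter (s : Finset α) :
    ∀ k, ((allParts s).filter (fun P => P.card = k)).card = stirling2 s.card k := by
  classical
  induction s using Finset.induction_on with
  | empty =>
    intro k
    rw [allParts_empty]
    cases k with
    | zero => rw [Finset.filter_singleton]; simp [stirling2]
    | succ k =>
      simp only [Finset.card_empty, stirling2]
      rw [Finset.card_eq_zero, Finset.filter_eq_empty_iff]
      simp
  | @insert a s ha ih =>
    intro k
    rw [Finset.card_insert_of_notMem ha]
    cases k with
    | zero =>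
      simp only [stirling2]
      rw [Finset.card_eq_zero, Finset.filter_eq_empty_iff]
      intro P hP
      rw [mem_allParts] at hP
      intro h0
      rw [Finset.card_eq_zero] at h0
      subst h0
      obtain ⟨B, hB, -⟩ := hP.2.2 a (Finset.mem_insert_self a s)
      exact absurd hB.1 (by simp)
    | succ k =>
      -- split along whether {a} is a block
      set T := (allParts (insert a s)).filter (fun P => P.card = k + 1) with hT
      have hsplit : T.card = (T.filter (fun P => {a} ∈ P)).card +
          (T.filter (fun P => {a} ∉ P)).card :=
        (Finset.card_filter_add_card_filter_not _).symm
      have h1 : (T.filter (fun P => {a} ∈ P)).card =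
          ((allParts s).filter (fun P => P.card = k)).card := by
        apply Finset.card_bij (fun P _ => P.erase {a})
        · -- maps into target
          intro P hP
          simp only [hT, Finset.mem_filter, mem_allParts] at hP ⊢
          obtain ⟨⟨hpart, hcard⟩, hmem⟩ := hP
          have hnota : ∀ B ∈ P.erase {a}, a ∉ B := by
            intro B hB haB
            exact (Finset.mem_erase.mp hB).1
              (block_unique hpart (Finset.mem_erase.mp hB).2 hmem haB (by simp))
          refine ⟨⟨?_, ?_, ?_⟩, ?_⟩
          · intro B hB x hx
            have := hpart.1 B (Finset.mem_erase.mp hB).2 hx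
            rcases Finset.mem_insert.mp this with h | h
            · exact absurd (h ▸ hx) (hnota B hB)
            · exact h
          · exact fun B hB => hpart.2.1 B (Finset.mem_erase.mp hB).2
          · intro x hx
            obtain ⟨B, hB, hu⟩ := hpart.2.2 x (Finset.mem_insert_of_mem hx)
            have hBne : B ≠ {a} := by
              rintro rfl
              rw [Finset.mem_singleton] at hB
              exact ha (hB.2 ▸ hx)
            exact ⟨B, ⟨Finset.mem_erase.mpr ⟨hBne, hB.1⟩, hB.2⟩,
              fun C hC => hu C ⟨(Finset.mem_erase.mp hC.1).2, hC.2⟩⟩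
          · rw [Finset.card_erase_of_mem hmem, hcard]; rfl
        · -- injective
          intro P hP P' hP' hee
          simp only [hT, Finset.mem_filter] at hP hP'
          have : insert {a} (P.erase {a}) = insert {a} (P'.erase {a}) := by rw [hee]
          rwa [Finset.insert_erase hP.2, Finset.insert_erase hP'.2] at this
        · -- surjective
          intro Q hQ
          simp only [Finset.mem_filter, mem_allParts] at hQ
          obtain ⟨hpart, hcard⟩ := hQ
          have hnot : {a} ∉ Q := fun h => ha (hpart.1 _ h (by simp))
          refine ⟨insert {a} Q, ?_, ?_⟩
          · simp only [hT, Finset.mem_filter, mem_allParts]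
            refine ⟨⟨⟨?_, ?_, ?_⟩, ?_⟩, by simp⟩
            · intro B hB
              rcases Finset.mem_insert.mp hB with rfl | h
              · simp
              · exact (hpart.1 B h).trans (Finset.subset_insert _ _)
            · intro B hB
              rcases Finset.mem_insert.mp hB with rfl | h
              · simp
              · exact hpart.2.1 B h
            · intro x hx
              rcases Finset.mem_insert.mp hx with rfl | h
              · refine ⟨{x}, ⟨by simp, by simp⟩, ?_⟩
                rintro C ⟨hC, hxC⟩
                rcases Finset.mem_insert.mp hC with rfl | h
                · rfl
                · exact absurd (hpart.1 C h hxC) ha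
              · obtain ⟨B, hB, hu⟩ := hpart.2.2 x h
                refine ⟨B, ⟨Finset.mem_insert_of_mem hB.1, hB.2⟩, ?_⟩
                rintro C ⟨hC, hxC⟩
                rcases Finset.mem_insert.mp hC with rfl | hC'
                · exact absurd (Finset.mem_singleton.mp hxC) (by rintro rfl; exact ha h)
                · exact hu C ⟨hC', hxC⟩
            · rw [Finset.card_insert_of_notMem hnot, hcard]
          · rw [Finset.erase_insert hnot]
      have h2 : (T.filter (fun P => {a} ∉ P)).card =
          (k + 1) * ((allParts s).filter (fun P => P.card = k + 1)).card := by
        have hsig : (((allParts s).filter (fun P => P.card = k + 1)).sigma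
            (fun Q => Q)).card =
            (k + 1) * ((allParts s).filter (fun P => P.card = k + 1)).card := by
          rw [Finset.card_sigma,
            Finset.sum_congr rfl (fun Q hQ => (Finset.mem_filter.mp hQ).2),
            Finset.sum_const, smul_eq_mul, Nat.mul_comm]
        rw [← hsig]
        refine (Finset.card_bij (fun p _ => insert (insert a p.2) (p.1.erase p.2))
          ?_ ?_ ?_).symm
        · -- maps into target
          rintro ⟨Q, B⟩ hp
          rw [Finset.mem_sigma] at hp
          obtain ⟨hQ, hB⟩ := hp
          rw [Finset.mem_filter, mem_allParts] at hQ
          obtain ⟨hpart, hQcard⟩ := hQ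
          have haB : a ∉ B := fun h => ha (hpart.1 B hB h)
          have hiaB : insert a B ∉ Q.erase B := fun h =>
            ha (hpart.1 _ (Finset.mem_erase.mp h).2 (Finset.mem_insert_self a B))
          have hasub : ∀ C ∈ Q.erase B, a ∉ C := fun C hC h =>
            ha (hpart.1 C (Finset.mem_erase.mp hC).2 h)
          simp only [hT, Finset.mem_filter, mem_allParts]
          refine ⟨⟨⟨?_, ?_, ?_⟩, ?_⟩, ?_⟩
          · intro C hC
            rcases Finset.mem_insert.mp hC with rfl | h
            · exact Finset.insert_subset_insert a (hpart.1 B hB)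
            · exact (hpart.1 C (Finset.mem_erase.mp h).2).trans (Finset.subset_insert _ _)
          · intro C hC
            rcases Finset.mem_insert.mp hC with rfl | h
            · exact Finset.insert_nonempty _ _
            · exact hpart.2.1 C (Finset.mem_erase.mp h).2
          · intro x hx
            rcases Finset.mem_insert.mp hx with hax | hxs
            · refine ⟨insert a B, ⟨Finset.mem_insert_self _ _,
                hax ▸ Finset.mem_insert_self a B⟩, ?_⟩
              rintro C ⟨hC, hxC⟩
              rcases Finset.mem_insert.mp hC with rfl | h
              · rfl
              · exact absurd (hax ▸ hxC) (hasub C h)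
            · by_cases hxB : x ∈ B
              · refine ⟨insert a B, ⟨Finset.mem_insert_self _ _,
                  Finset.mem_insert_of_mem hxB⟩, ?_⟩
                rintro C ⟨hC, hxC⟩
                rcases Finset.mem_insert.mp hC with rfl | h
                · rfl
                · exact absurd (block_unique hpart (Finset.mem_erase.mp h).2 hB hxC hxB)
                    (Finset.mem_erase.mp h).1
              · obtain ⟨D, hD, hu⟩ := hpart.2.2 x hxs
                have hDB : D ≠ B := fun h => hxB (h ▸ hD.2)
                refine ⟨D, ⟨Finset.mem_insert_of_mem (Finset.mem_erase.mpr ⟨hDB, hD.1⟩),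
                  hD.2⟩, ?_⟩
                rintro C ⟨hC, hxC⟩
                rcases Finset.mem_insert.mp hC with rfl | h
                · rcases Finset.mem_insert.mp hxC with rfl | h'
                  · exact absurd hxs ha
                  · exact absurd h' hxB
                · exact hu C ⟨(Finset.mem_erase.mp h).2, hxC⟩
          · rw [Finset.card_insert_of_notMem hiaB, Finset.card_erase_of_mem hB, hQcard]
            omega
          · intro h
            rcases Finset.mem_insert.mp h with h' | h'
            · obtain ⟨y, hy⟩ := hpart.2.1 B hB
              have : y ∈ ({a} : Finset α) := h' ▸ Finset.mem_insert_of_mem hy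
              rw [Finset.mem_singleton] at this
              exact ha (this ▸ hpart.1 B hB hy)
            · exact ha (hpart.1 _ (Finset.mem_erase.mp h').2 (Finset.mem_singleton_self a))
        · -- injective
          rintro ⟨Q, B⟩ hp ⟨Q', B'⟩ hp' heq
          simp only at heq
          rw [Finset.mem_sigma] at hp hp'
          obtain ⟨hQ, hB⟩ := hp
          obtain ⟨hQ', hB'⟩ := hp'
          rw [Finset.mem_filter, mem_allParts] at hQ hQ'
          dsimp only at hB hB' hQ hQ'
          have haB : a ∉ B := fun h => ha (hQ.1.1 B hB h)
          have haB' : a ∉ B' := fun h => ha (hQ'.1.1 B' hB' h)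
          have hiaB : insert a B ∉ Q.erase B := fun h =>
            ha (hQ.1.1 _ (Finset.mem_erase.mp h).2 (Finset.mem_insert_self a B))
          have hiaB' : insert a B' ∉ Q'.erase B' := fun h =>
            ha (hQ'.1.1 _ (Finset.mem_erase.mp h).2 (Finset.mem_insert_self a B'))
          have hBB : B = B' := by
            have : insert a B ∈ insert (insert a B') (Q'.erase B') := by
              rw [← heq]; exact Finset.mem_insert_self _ _
            rcases Finset.mem_insert.mp this with h | h
            · rw [← Finset.erase_insert haB, ← Finset.erase_insert haB', h]
            · exact absurd (hQ'.1.1 _ (Finset.mem_erase.mp h).2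
                (Finset.mem_insert_self a B)) (fun hs => ha hs)
          subst hBB
          have hQQ : Q = Q' := by
            have h1 : (insert (insert a B) (Q.erase B)).erase (insert a B) = Q.erase B :=
              Finset.erase_insert hiaB
            have h2 : (insert (insert a B) (Q'.erase B)).erase (insert a B) = Q'.erase B :=
              Finset.erase_insert hiaB'
            have : Q.erase B = Q'.erase B := by rw [← h1, ← h2, heq]
            rw [← Finset.insert_erase hB, this, Finset.insert_erase hB']
          subst hQQ
          rfl
        · -- surjective
          intro P hP
          simp only [hT, Finset.mem_filter, mem_allParts] at hP
          obtain ⟨⟨hpart, hcard⟩, hnot⟩ := hP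
          obtain ⟨A, ⟨hA, haA⟩, huA⟩ := hpart.2.2 a (Finset.mem_insert_self a s)
          have hAne : A ≠ {a} := fun h => hnot (h ▸ hA)
          obtain ⟨y, hy, hya⟩ : ∃ y ∈ A, y ≠ a := by
            by_contra hcon
            push_neg at hcon
            exact hAne (Finset.eq_singleton_iff_unique_mem.mpr ⟨haA, hcon⟩)
          have hyB : y ∈ A.erase a := Finset.mem_erase.mpr ⟨hya, hy⟩
          have hnomem : A.erase a ∉ P.erase A := by
            intro h
            exact (Finset.mem_erase.mp h).1
              (block_unique hpart (Finset.mem_erase.mp h).2 hA hyB hy)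
          have hasubP : ∀ C ∈ P.erase A, a ∉ C := fun C hC h =>
            (Finset.mem_erase.mp hC).1 (huA C ⟨(Finset.mem_erase.mp hC).2, h⟩)
          have hsubP : ∀ C ∈ P.erase A, C ⊆ s := by
            intro C hC x hx
            rcases Finset.mem_insert.mp (hpart.1 C (Finset.mem_erase.mp hC).2 hx) with h | h
            · exact absurd (h ▸ hx) (hasubP C hC)
            · exact h
          refine ⟨⟨insert (A.erase a) (P.erase A), A.erase a⟩, ?_, ?_⟩
          · rw [Finset.mem_sigma]
            refine ⟨?_, Finset.mem_insert_self _ _⟩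
            rw [Finset.mem_filter, mem_allParts]
            refine ⟨⟨?_, ?_, ?_⟩, ?_⟩
            · intro C hC
              rcases Finset.mem_insert.mp hC with rfl | h
              · intro x hx
                rcases Finset.mem_insert.mp
                    (hpart.1 A hA (Finset.mem_erase.mp hx).2) with h' | h'
                · exact absurd h' (Finset.mem_erase.mp hx).1
                · exact h'
              · exact hsubP C h
            · intro C hC
              rcases Finset.mem_insert.mp hC with rfl | h
              · exact ⟨y, hyB⟩
              · exact hpart.2.1 C (Finset.mem_erase.mp h).2
            · intro x hx
              have hxa : x ≠ a := fun h => ha (h ▸ hx)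
              obtain ⟨D, ⟨hD, hxD⟩, hu⟩ := hpart.2.2 x (Finset.mem_insert_of_mem hx)
              by_cases hDA : D = A
              · refine ⟨A.erase a, ⟨Finset.mem_insert_self _ _,
                  Finset.mem_erase.mpr ⟨hxa, hDA ▸ hxD⟩⟩, ?_⟩
                rintro C ⟨hC, hxC⟩
                rcases Finset.mem_insert.mp hC with rfl | h
                · rfl
                · exact absurd ((hu C ⟨(Finset.mem_erase.mp h).2, hxC⟩).trans hDA)
                    (Finset.mem_erase.mp h).1
              · refine ⟨D, ⟨Finset.mem_insert_of_mem (Finset.mem_erase.mpr ⟨hDA, hD⟩),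
                  hxD⟩, ?_⟩
                rintro C ⟨hC, hxC⟩
                rcases Finset.mem_insert.mp hC with rfl | h
                · exact absurd (hu A ⟨hA, (Finset.mem_erase.mp hxC).2⟩) (fun h => hDA h.symm)
                · exact hu C ⟨(Finset.mem_erase.mp h).2, hxC⟩
            · rw [Finset.card_insert_of_notMem hnomem, Finset.card_erase_of_mem hA, hcard]
              omega
          · show insert (insert a (A.erase a))
                ((insert (A.erase a) (P.erase A)).erase (A.erase a)) = P
            rw [Finset.erase_insert hnomem, Finset.insert_erase haA, Finset.insert_erase hA]
      rw [hsplit, h1, h2, ih, ih]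
      simp only [stirling2]
      ring


lemma sum_allParts_eq_bellPoly (s : Finset α) (t : ℝ) :
    ∑ P ∈ allParts s, t ^ P.card = bellPoly s.card t := by
  rw [bellPoly,
    ← Finset.sum_fiberwise_of_maps_to (g := fun P : Finset (Finset α) => P.card)
      (fun P hP => Finset.mem_range.mpr (Nat.lt_succ_of_le (mem_allParts.mp hP).card_le))]
  refine Finset.sum_congr rfl fun k _ => ?_
  calc ∑ P ∈ (allParts s).filter (fun P => P.card = k), t ^ P.card
      = ∑ _P ∈ (allParts s).filter (fun P => P.card = k), t ^ k :=
        Finset.sum_congr rfl (fun P hP => by rw [(Finset.mem_filter.mp hP).2])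
    _ = _ := by rw [Finset.sum_const, card_allParts_filter, nsmul_eq_mul]

lemma sum_allParts_image {β : Type*} [DecidableEq β] [Fintype β] (f : α → β)
    (hf : Function.Injective f) (s : Finset α) (t : ℝ) :
    ∑ P ∈ allParts s, t ^ P.card = ∑ P ∈ allParts (s.image f), t ^ P.card := by
  refine Finset.sum_bij (fun P _ => P.image (fun B => B.image f)) ?_ ?_ ?_ ?_
  · intro P hP
    rw [mem_allParts] at hP ⊢
    refine ⟨?_, ?_, ?_⟩
    · intro B' hB'
      obtain ⟨B, hB, rfl⟩ := Finset.mem_image.mp hB'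
      exact Finset.image_subset_image (hP.1 B hB)
    · intro B' hB'
      obtain ⟨B, hB, rfl⟩ := Finset.mem_image.mp hB'
      exact (hP.2.1 B hB).image f
    · intro y hy
      obtain ⟨x, hx, rfl⟩ := Finset.mem_image.mp hy
      obtain ⟨B, ⟨hB, hxB⟩, hu⟩ := hP.2.2 x hx
      refine ⟨B.image f, ⟨Finset.mem_image_of_mem _ hB, Finset.mem_image_of_mem f hxB⟩, ?_⟩
      rintro C' ⟨hC', hyC'⟩
      obtain ⟨C, hC, rfl⟩ := Finset.mem_image.mp hC'
      obtain ⟨z, hz, hfz⟩ := Finset.mem_image.mp hyC'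
      rw [hu C ⟨hC, hf hfz ▸ hz⟩]
  · intro P hP P' hP' h
    exact Finset.image_injective (Finset.image_injective hf) h
  · intro Q hQ
    rw [mem_allParts] at hQ
    have key : ∀ B ∈ Q, (s.filter (fun x => f x ∈ B)).image f = B := by
      intro B hB
      ext y
      constructor
      · intro hy
        obtain ⟨x, hx, rfl⟩ := Finset.mem_image.mp hy
        exact (Finset.mem_filter.mp hx).2
      · intro hy
        obtain ⟨x, hx, rfl⟩ := Finset.mem_image.mp (hQ.1 B hB hy)
        exact Finset.mem_image_of_mem f (Finset.mem_filter.mpr ⟨hx, hy⟩)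
    refine ⟨Q.image (fun B => s.filter (fun x => f x ∈ B)), ?_, ?_⟩
    · rw [mem_allParts]
      refine ⟨?_, ?_, ?_⟩
      · intro C hC
        obtain ⟨B, hB, rfl⟩ := Finset.mem_image.mp hC
        exact Finset.filter_subset _ _
      · intro C hC
        obtain ⟨B, hB, rfl⟩ := Finset.mem_image.mp hC
        obtain ⟨y, hy⟩ := hQ.2.1 B hB
        obtain ⟨x, hx, rfl⟩ := Finset.mem_image.mp (hQ.1 B hB hy)
        exact ⟨x, Finset.mem_filter.mpr ⟨hx, hy⟩⟩
      · intro x hx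
        obtain ⟨B, ⟨hB, hxB⟩, hu⟩ := hQ.2.2 (f x) (Finset.mem_image_of_mem f hx)
        refine ⟨s.filter (fun z => f z ∈ B), ⟨Finset.mem_image_of_mem _ hB,
          Finset.mem_filter.mpr ⟨hx, hxB⟩⟩, ?_⟩
        rintro C ⟨hC, hxC⟩
        obtain ⟨D, hD, rfl⟩ := Finset.mem_image.mp hC
        rw [hu D ⟨hD, (Finset.mem_filter.mp hxC).2⟩]
    · show Finset.image (fun B => Finset.image f B)
          (Q.image (fun B => Finset.filter (fun x => f x ∈ B) s)) = Q
      rw [Finset.image_image]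
      calc Q.image _ = Q.image id := Finset.image_congr (fun B hB => key B hB)
        _ = Q := Finset.image_id
  · intro P hP
    rw [Finset.card_image_of_injective P (Finset.image_injective hf)]


lemma isCyclicBlock_iff_const {α ι : Type*} [LinearOrder α] (f : α → ι) (B : Finset α) :
    IsCyclicBlock f f B ↔ ∀ x ∈ B, ∀ y ∈ B, f x = f y := by
  constructor
  · intro h x hx y hy
    obtain ⟨⟨n, hnlt⟩, rfl⟩ := List.mem_iff_get.mp ((Finset.mem_sort (α := α) (· ≤ ·)).mpr hx)
    obtain ⟨⟨m, hmlt⟩, rfl⟩ := List.mem_iff_get.mp ((Finset.mem_sort (α := α) (· ≤ ·)).mpr hy)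
    have hlen : 0 < (B.sort (· ≤ ·)).length := Nat.lt_of_le_of_lt (Nat.zero_le n) hnlt
    have key : ∀ p (hp : p < (B.sort (· ≤ ·)).length),
        f ((B.sort (· ≤ ·)).get ⟨p, hp⟩) = f ((B.sort (· ≤ ·)).get ⟨0, hlen⟩) := by
      intro p
      induction p with
      | zero => intro hp; rfl
      | succ q ihq =>
        intro hp
        have hq : q < (B.sort (· ≤ ·)).length := Nat.lt_of_succ_lt hp
        have hstep := h ⟨q, hq⟩
        have hmod : (q + 1) % (B.sort (· ≤ ·)).length = q + 1 := Nat.mod_eq_of_lt hp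
        rw [← ihq hq, hstep]
        exact congrArg (fun i => f ((B.sort (· ≤ ·)).get i)) (Fin.ext hmod.symm)
    rw [key n hnlt, key m hmlt]
  · intro hc n
    exact hc _ ((Finset.mem_sort (α := α) (· ≤ ·)).mp (List.get_mem _ _))
      _ ((Finset.mem_sort (α := α) (· ≤ ·)).mp (List.get_mem _ _))

end StateDiag

/-- Under the state given by the set-partition moment formula, the diagonal generators
are independent: for a word with `M = m₁ + ⋯ + m_r` positions, where position `p`
carries the loop edge `(c(g p), c(g p))`, the group `g⁻¹(s)` has `m_s` elements and
the diagonal indices `c 1, …, c r` are distinct,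
`⟨E_{i₁i₁}^{m₁} ⋯ E_{i_ri_r}^{m_r}⟩_t = ∏_s ⟨E_{i_si_s}^{m_s}⟩_t = ∏_s B_{m_s}(t)`. -/
theorem state_diagonal_independent (M r : ℕ) (mexp : Fin r → ℕ) (c : Fin r → ℕ)
    (hc : Function.Injective c) (g : Fin M → Fin r)
    (hg : ∀ s, (Finset.univ.filter (fun p => g p = s)).card = mexp s) (t : ℝ) :
    (∑ P ∈ Finset.univ.filter (fun P : Finset (Finset (Fin M)) =>
        IsSetPartition P ∧ ∀ B ∈ P,
          IsCyclicBlock (fun p => c (g p)) (fun p => c (g p)) B), t ^ P.card) =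
      (∏ s : Fin r, ∑ P ∈ Finset.univ.filter
          (fun P : Finset (Finset (Fin (mexp s))) => IsSetPartition P), t ^ P.card) ∧
    (∑ P ∈ Finset.univ.filter (fun P : Finset (Finset (Fin M)) =>
        IsSetPartition P ∧ ∀ B ∈ P,
          IsCyclicBlock (fun p => c (g p)) (fun p => c (g p)) B), t ^ P.card) =
      ∏ s : Fin r, bellPoly (mexp s) t := by
    classical
  set fiber : Fin r → Finset (Fin M) := fun s => Finset.univ.filter (fun p => g p = s)
    with hfiber
  have hfib_mem : ∀ (p : Fin M) (s : Fin r), p ∈ fiber s ↔ g p = s := by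
    intro p s; simp [hfiber]
  have hcards : ∀ s, (fiber s).card = mexp s := fun s => hg s
  have hfib_disj : ∀ s s' : Fin r, s ≠ s' → ∀ (B : Finset (Fin M)), B.Nonempty →
      B ⊆ fiber s → B ⊆ fiber s' → False := by
    rintro s s' hss B ⟨x, hx⟩ h1 h2
    exact hss (((hfib_mem x s).mp (h1 hx)).symm.trans ((hfib_mem x s').mp (h2 hx)))
  have hPr : Finset.univ.filter (fun P : Finset (Finset (Fin M)) =>
      IsSetPartition P ∧ ∀ B ∈ P, IsCyclicBlock (fun p => c (g p)) (fun p => c (g p)) B) =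
      Finset.univ.filter (fun P => StateDiag.PartsOn Finset.univ P ∧
        ∀ B ∈ P, ∃ s, B ⊆ fiber s) := by
    apply Finset.filter_congr
    intro P _
    constructor
    · rintro ⟨hsp, hcy⟩
      have hpart : StateDiag.PartsOn Finset.univ P :=
        ⟨fun B _ => Finset.subset_univ B, hsp.1, fun x _ => hsp.2 x⟩
      refine ⟨hpart, fun B hB => ?_⟩
      obtain ⟨x, hx⟩ := hsp.1 B hB
      refine ⟨g x, fun y hy => ?_⟩
      have hcg := (StateDiag.isCyclicBlock_iff_const _ B).mp (hcy B hB) y hy x hx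
      exact (hfib_mem y (g x)).mpr (hc hcg)
    · rintro ⟨hpart, hfib⟩
      refine ⟨⟨hpart.2.1, fun x => hpart.2.2 x (Finset.mem_univ x)⟩, fun B hB => ?_⟩
      obtain ⟨s, hs⟩ := hfib B hB
      exact (StateDiag.isCyclicBlock_iff_const _ B).mpr (fun x hx y hy => by
        rw [(hfib_mem x s).mp (hs hx), (hfib_mem y s).mp (hs hy)])
  have hinner : ∀ s : Fin r,
      (∑ P ∈ Finset.univ.filter (fun P : Finset (Finset (Fin (mexp s))) =>
        IsSetPartition P), t ^ P.card) = ∑ P ∈ StateDiag.allParts (fiber s), t ^ P.card := by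
    intro s
    have h1 : Finset.univ.filter (fun P : Finset (Finset (Fin (mexp s))) => IsSetPartition P)
        = StateDiag.allParts (Finset.univ : Finset (Fin (mexp s))) := by
      unfold StateDiag.allParts
      apply Finset.filter_congr
      intro P _
      exact ⟨fun h => ⟨fun B _ => Finset.subset_univ B, h.1, fun x _ => h.2 x⟩,
        fun h => ⟨h.2.1, fun x => h.2.2 x (Finset.mem_univ x)⟩⟩
    have hinj : Function.Injective (fun i : Fin (mexp s) =>
        ((fiber s).equivFin.symm (Fin.cast (hcards s).symm i) : Fin M)) := by
      intro i j hij
      have h2 : Fin.cast (hcards s).symm i = Fin.cast (hcards s).symm j :=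
        (fiber s).equivFin.symm.injective (Subtype.ext hij)
      exact Fin.ext (by simpa using congrArg Fin.val h2)
    have himg : Finset.univ.image (fun i : Fin (mexp s) =>
        ((fiber s).equivFin.symm (Fin.cast (hcards s).symm i) : Fin M)) = fiber s := by
      apply Finset.eq_of_subset_of_card_le
      · intro x hx
        obtain ⟨i, -, rfl⟩ := Finset.mem_image.mp hx
        exact Finset.coe_mem _
      · refine le_of_eq ?_
        rw [Finset.card_image_of_injective _ hinj, Finset.card_univ, Fintype.card_fin,
          hcards s]
    rw [h1, StateDiag.sum_allParts_image _ hinj _ t, himg]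
  have hmain : (∑ P ∈ Finset.univ.filter (fun P : Finset (Finset (Fin M)) =>
      StateDiag.PartsOn Finset.univ P ∧ ∀ B ∈ P, ∃ s, B ⊆ fiber s), t ^ P.card) =
      ∏ s : Fin r, ∑ P ∈ StateDiag.allParts (fiber s), t ^ P.card := by
    rw [Finset.prod_univ_sum]
    refine (Finset.sum_bij (fun q _ => Finset.univ.biUnion q) ?_ ?_ ?_ ?_).symm
    · intro q hq
      rw [Fintype.mem_piFinset] at hq
      have hq' : ∀ s, StateDiag.PartsOn (fiber s) (q s) := fun s =>
        StateDiag.mem_allParts.mp (hq s)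
      simp only [Finset.mem_filter, Finset.mem_univ, true_and]
      refine ⟨⟨fun B _ => Finset.subset_univ B, ?_, ?_⟩, ?_⟩
      · intro B hB
        obtain ⟨s, -, hBs⟩ := Finset.mem_biUnion.mp hB
        exact (hq' s).2.1 B hBs
      · intro x _
        obtain ⟨B, ⟨hB, hxB⟩, hu⟩ := (hq' (g x)).2.2 x ((hfib_mem x (g x)).mpr rfl)
        refine ⟨B, ⟨Finset.mem_biUnion.mpr ⟨g x, Finset.mem_univ _, hB⟩, hxB⟩, ?_⟩
        rintro C ⟨hC, hxC⟩
        obtain ⟨s', -, hCs⟩ := Finset.mem_biUnion.mp hC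
        have hgx : g x = s' := (hfib_mem x s').mp ((hq' s').1 C hCs hxC)
        rw [← hgx] at hCs
        exact hu C ⟨hCs, hxC⟩
      · intro B hB
        obtain ⟨s, -, hBs⟩ := Finset.mem_biUnion.mp hB
        exact ⟨s, (hq' s).1 B hBs⟩
    · intro q hq q' hq' heq
      rw [Fintype.mem_piFinset] at hq hq'
      have key : ∀ (p : Fin r → Finset (Finset (Fin M))),
          (∀ s, p s ∈ StateDiag.allParts (fiber s)) → ∀ s,
          p s = (Finset.univ.biUnion p).filter (fun B => B ⊆ fiber s) := by
        intro p hp s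
        ext B
        rw [Finset.mem_filter, Finset.mem_biUnion]
        constructor
        · intro hB
          exact ⟨⟨s, Finset.mem_univ s, hB⟩, (StateDiag.mem_allParts.mp (hp s)).1 B hB⟩
        · rintro ⟨⟨s', -, hBs⟩, hBsub⟩
          have hpart := StateDiag.mem_allParts.mp (hp s')
          by_cases h : s' = s
          · exact h ▸ hBs
          · exact (hfib_disj s' s h B (hpart.2.1 B hBs) (hpart.1 B hBs) hBsub).elim
      funext s
      rw [key q hq s, key q' hq' s, heq]
    · intro P hP
      simp only [Finset.mem_filter, Finset.mem_univ, true_and] at hP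
      obtain ⟨hpart, hfib⟩ := hP
      refine ⟨fun s => P.filter (fun B => B ⊆ fiber s), ?_, ?_⟩
      · rw [Fintype.mem_piFinset]
        intro s
        rw [StateDiag.mem_allParts]
        refine ⟨fun B hB => (Finset.mem_filter.mp hB).2,
          fun B hB => hpart.2.1 B (Finset.mem_filter.mp hB).1, ?_⟩
        intro x hx
        obtain ⟨B, ⟨hB, hxB⟩, hu⟩ := hpart.2.2 x (Finset.mem_univ x)
        obtain ⟨s', hs'⟩ := hfib B hB
        have heqs : s' = s :=
          ((hfib_mem x s').mp (hs' hxB)).symm.trans ((hfib_mem x s).mp hx)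
        refine ⟨B, ⟨Finset.mem_filter.mpr ⟨hB, heqs ▸ hs'⟩, hxB⟩, ?_⟩
        rintro C ⟨hC, hxC⟩
        exact hu C ⟨(Finset.mem_filter.mp hC).1, hxC⟩
      · ext B
        rw [Finset.mem_biUnion]
        constructor
        · rintro ⟨s, -, hBs⟩
          exact (Finset.mem_filter.mp hBs).1
        · intro hB
          obtain ⟨s, hs⟩ := hfib B hB
          exact ⟨s, Finset.mem_univ s, Finset.mem_filter.mpr ⟨hB, hs⟩⟩
    · intro q hq
      rw [Fintype.mem_piFinset] at hq
      have hdisj : ∀ s ∈ Finset.univ, ∀ s' ∈ Finset.univ,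
          s ≠ s' → Disjoint (q s) (q s') := by
        intro s _ s' _ hss
        rw [Finset.disjoint_left]
        intro B hBs hBs'
        have h1 := StateDiag.mem_allParts.mp (hq s)
        have h2 := StateDiag.mem_allParts.mp (hq s')
        exact hfib_disj s s' hss B (h1.2.1 B hBs) (h1.1 B hBs) (h2.1 B hBs')
      rw [Finset.card_biUnion hdisj]
      exact Finset.prod_pow_eq_pow_sum _ _ _
  constructor
  · rw [hPr, hmain]
    exact Finset.prod_congr rfl (fun s _ => (hinner s).symm)
  · rw [hPr, hmain]
    refine Finset.prod_congr rfl (fun s _ => ?_)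
    rw [StateDiag.sum_allParts_eq_bellPoly, hcards s]
end
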